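/- arXiv:1203.2037 — 7 statements merged into one kernel-verified Lean document; each statement's English description precedes it below -/
import Mathlib

section
/- The map R_{α,β}(x,y) = (αy(x+y)/(βx+αy), βx(x+y)/(βx+αy)) on ℂ × ℂ satisfies the parametric Yang–Baxter equation R²³_{β,γ} ∘ R¹³_{α,γ} ∘ R¹²_{α,β} = R¹²_{α,β} ∘ R¹³_{α,γ} ∘ R²³_{β,γ}, wherever all expressions are defined. -/
noncomputable section

/-- First component of the map. -/
def uYB (α β x y : ℂ) : ℂ := α*y*(x+y) / (β*x+α*y)

/-- Second component of the map. -/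
def vYB (α β x y : ℂ) : ℂ := β*x*(x+y) / (β*x+α*y)

/-- The denominator appearing in the map. -/
def dYB (α β x y : ℂ) : ℂ := β*x+α*y

/-!
Since `R_{β,α}(y, x)` is `R_{α,β}(x, y)` with its components swapped, conjugating by the reversal
`(x, y, z) ↦ (z, y, x)` turns the left-hand side of the Yang–Baxter equation into the right-hand
side with `(α, β, γ)` replaced by `(γ, β, α)`. So it suffices to compute the left-hand side in
closed form, which turns out to be invariant under this reversal. The denominators of the closed
form, `ybDen α β γ x y z` and `ybDen γ β α z y x`, are nonzero because they are factors of the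
numerators of the intermediate denominators `dYB α γ x₁ z` and `dYB β γ y₁ z₁`.
-/

theorem uYB_eq (α β x y : ℂ) : uYB α β x y = α*y*(x+y) / dYB α β x y := rfl

theorem vYB_eq (α β x y : ℂ) : vYB α β x y = β*x*(x+y) / dYB α β x y := rfl

theorem dYB_swap (α β x y : ℂ) : dYB β α y x = dYB α β x y := by
  unfold dYB; ring

theorem uYB_swap (α β x y : ℂ) : uYB β α y x = vYB α β x y := by
  rw [uYB_eq, vYB_eq, dYB_swap, add_comm y]

theorem vYB_swap (α β x y : ℂ) : vYB β α y x = uYB α β x y := by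
  rw [uYB_eq, vYB_eq, dYB_swap, add_comm y]

def ybNum (α β x y z : ℂ) : ℂ := α*y*(x+y) + z * dYB α β x y

def ybDen (α β γ x y z : ℂ) : ℂ := γ*y*(x+y) + z * dYB α β x y

section Composites

variable {α β γ x y z : ℂ}

theorem dYB_uYB (hD : dYB α β x y ≠ 0) :
    dYB α γ (uYB α β x y) z = α * ybDen α β γ x y z / dYB α β x y := by
  rw [dYB, uYB_eq, ybDen]; field_simp

theorem uYB_add (hD : dYB α β x y ≠ 0) :
    uYB α β x y + z = ybNum α β x y z / dYB α β x y := by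
  rw [uYB_eq, ybNum]; field_simp

theorem uYB_uYB (hD : dYB α β x y ≠ 0) (hα : α ≠ 0) :
    uYB α γ (uYB α β x y) z = z * ybNum α β x y z / ybDen α β γ x y z := by
  rw [uYB_eq, dYB_uYB hD, uYB_add hD]
  field_simp

theorem vYB_uYB (hD : dYB α β x y ≠ 0) (hα : α ≠ 0) :
    vYB α γ (uYB α β x y) z
      = γ * y * (x + y) * ybNum α β x y z / (dYB α β x y * ybDen α β γ x y z) := by
  rw [vYB_eq, dYB_uYB hD, uYB_add hD, uYB_eq]
  field_simp

theorem dYB_vYB_vYB (hD : dYB α β x y ≠ 0) (hK : ybDen α β γ x y z ≠ 0) :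
    dYB β γ (vYB α β x y)
        (γ * y * (x + y) * ybNum α β x y z / (dYB α β x y * ybDen α β γ x y z))
      = β * γ * (x + y) ^ 2 * ybDen γ β α z y x / (dYB α β x y * ybDen α β γ x y z) := by
  rw [dYB, vYB_eq]
  field_simp
  unfold ybDen ybNum dYB
  ring

theorem vYB_add_vYB (hD : dYB α β x y ≠ 0) (hK : ybDen α β γ x y z ≠ 0) :
    vYB α β x y + γ * y * (x + y) * ybNum α β x y z / (dYB α β x y * ybDen α β γ x y z)
      = (x + y) * ybNum γ β z y x / ybDen α β γ x y z := by
  rw [vYB_eq, div_add_div _ _ hD (mul_ne_zero hD hK),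
    div_eq_div_iff (mul_ne_zero hD (mul_ne_zero hD hK)) hK]
  unfold ybDen ybNum dYB
  ring

theorem yangBaxter_lhs (h₁ : dYB α β x y ≠ 0) (h₂ : dYB α γ (uYB α β x y) z ≠ 0)
    (h₃ : dYB β γ (vYB α β x y) (vYB α γ (uYB α β x y) z) ≠ 0) :
    uYB α γ (uYB α β x y) z = z * ybNum α β x y z / ybDen α β γ x y z ∧
    uYB β γ (vYB α β x y) (vYB α γ (uYB α β x y) z)
      = y * ybNum α β x y z * ybNum γ β z y x / (ybDen α β γ x y z * ybDen γ β α z y x) ∧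
    vYB β γ (vYB α β x y) (vYB α γ (uYB α β x y) z)
      = x * ybNum γ β z y x / ybDen γ β α z y x := by
  rw [dYB_uYB h₁, div_ne_zero_iff, mul_ne_zero_iff] at h₂
  obtain ⟨⟨hα, hK⟩, -⟩ := h₂
  rw [vYB_uYB h₁ hα, dYB_vYB_vYB h₁ hK, div_ne_zero_iff, mul_ne_zero_iff,
    mul_ne_zero_iff, mul_ne_zero_iff, pow_ne_zero_iff two_ne_zero] at h₃
  obtain ⟨⟨⟨⟨hβ, hγ⟩, hS⟩, hN⟩, -⟩ := h₃
  rw [vYB_uYB h₁ hα]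
  refine ⟨uYB_uYB h₁ hα, ?_, ?_⟩
  · rw [uYB_eq, dYB_vYB_vYB h₁ hK, vYB_add_vYB h₁ hK]
    field_simp
  · rw [vYB_eq, dYB_vYB_vYB h₁ hK, vYB_add_vYB h₁ hK, vYB_eq]
    field_simp

theorem yangBaxter_rhs (h₄ : dYB β γ y z ≠ 0)
    (h₅ : dYB α γ x (vYB β γ y z) ≠ 0)
    (h₆ : dYB α β (uYB α γ x (vYB β γ y z)) (uYB β γ y z) ≠ 0) :
    uYB α β (uYB α γ x (vYB β γ y z)) (uYB β γ y z) = z * ybNum α β x y z / ybDen α β γ x y z ∧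
    vYB α β (uYB α γ x (vYB β γ y z)) (uYB β γ y z)
      = y * ybNum α β x y z * ybNum γ β z y x / (ybDen α β γ x y z * ybDen γ β α z y x) ∧
    vYB α γ x (vYB β γ y z) = x * ybNum γ β z y x / ybDen γ β α z y x := by
  have hswap₁ : uYB γ β z y = vYB β γ y z := uYB_swap β γ y z
  have hswap₂ : vYB γ β z y = uYB β γ y z := vYB_swap β γ y z
  have hswap₃ : vYB γ α (vYB β γ y z) x = uYB α γ x (vYB β γ y z) := vYB_swap α γ x _
  obtain ⟨e₁, e₂, e₃⟩ := yangBaxter_lhs (α := γ) (β := β) (γ := α) (x := z) (y := y) (z := x)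
    (by rwa [dYB_swap]) (by rwa [hswap₁, dYB_swap]) (by rwa [hswap₁, hswap₂, hswap₃, dYB_swap])
  simp only [hswap₁, hswap₂, hswap₃] at e₁ e₂ e₃
  rw [uYB_swap α γ] at e₁
  rw [uYB_swap α β] at e₂
  rw [vYB_swap α β] at e₃
  refine ⟨e₃, ?_, e₁⟩
  rw [e₂, mul_right_comm y, mul_comm (ybDen _ _ _ _ _ _)]

end Composites

/-- the map `R_(α,β)(x,y) = (αy(x+y)/(βx+αy), βx(x+y)/(βx+αy))` satisfies the parametric Yang–Baxter equation
`R²³ ∘ R¹³ ∘ R¹² = R¹² ∘ R¹³ ∘ R²³` on `ℂ³`, wherever all denominators are nonzero. -/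
theorem Q1_YangBaxter (α β γ x y z : ℂ)
    (x₁ y₁ x₂ z₁ y₂ z₂ ty tz tx tzz txx tyy : ℂ)
    -- left-hand side  R²³_(β,γ) ∘ R¹³_(α,γ) ∘ R¹²_(α,β) (x,y,z):
    (hx₁ : x₁ = uYB α β x y) (hy₁ : y₁ = vYB α β x y)
    (hx₂ : x₂ = uYB α γ x₁ z) (hz₁ : z₁ = vYB α γ x₁ z)
    (hy₂ : y₂ = uYB β γ y₁ z₁) (hz₂ : z₂ = vYB β γ y₁ z₁)
    -- right-hand side  R¹²_(α,β) ∘ R¹³_(α,γ) ∘ R²³_(β,γ) (x,y,z):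
    (hty : ty = uYB β γ y z) (htz : tz = vYB β γ y z)
    (htx : tx = uYB α γ x tz) (htzz : tzz = vYB α γ x tz)
    (htxx : txx = uYB α β tx ty) (htyy : tyy = vYB α β tx ty)
    -- all denominators nonzero:
    (h1 : dYB α β x y ≠ 0) (h2 : dYB α γ x₁ z ≠ 0) (h3 : dYB β γ y₁ z₁ ≠ 0)
    (h4 : dYB β γ y z ≠ 0) (h5 : dYB α γ x tz ≠ 0) (h6 : dYB α β tx ty ≠ 0) :
    x₂ = txx ∧ y₂ = tyy ∧ z₂ = tzz := by
  subst x₁ y₁ x₂ z₁ y₂ z₂ ty tz tx tzz txx tyy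
  obtain ⟨l₁, l₂, l₃⟩ := yangBaxter_lhs h1 h2 h3
  obtain ⟨r₁, r₂, r₃⟩ := yangBaxter_rhs h4 h5 h6
  exact ⟨l₁.trans r₁.symm, l₂.trans r₂.symm, l₃.trans r₃.symm⟩

end
end

section
/- The ternary operation μ_{α,β}(a,b,c) = b − (α−β)/(c−a) on ℂ, arising from the discrete KdV equation (c−a)(b−w) = α−β, satisfies the two 3D-compatibility identities μ_{β,γ}(a, μ_{α,β}(a,b,c), μ_{α,γ}(μ_{α,β}(a,b,c), c, d)) = μ_{α,γ}(a, b, μ_{β,γ}(b,c,d)) and μ_{α,β}(μ_{α,γ}(a,b,μ_{β,γ}(b,c,d)), μ_{β,γ}(b,c,d), d) = μ_{α,γ}(μ_{α,β}(a,b,c), c, d), wherever all denominators are nonzero. -/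
/-!
Put `X = (c - a) * (d - b)`, `P = X + (α - β)` and `Q = X - (β - γ)`, so that `P - Q = α - γ`.
Along the cube, `d - w₁ = P / (c - a)`, `w₂ - a = Q / (d - b)`, `t₁ - a = (c - a) * Q / P` and
`d - r₁ = (d - b) * P / Q`; with these, both identities reduce to
`(α - β) * Q + (β - γ) * P = (α - γ) * X`.
-/

noncomputable section

/-- The discrete KdV ternary operation. -/
def muKdV (α β a b c : ℂ) : ℂ := b - (α-β)/(c-a)

section

variable {α β γ a b c d : ℂ}

lemma sub_muKdV (hca : c - a ≠ 0) (e : ℂ) :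
    e - muKdV α β a b c = ((c - a) * (e - b) + (α - β)) / (c - a) := by
  unfold muKdV; field_simp; ring

lemma muKdV_sub (hca : c - a ≠ 0) (e : ℂ) :
    muKdV α β a b c - e = ((c - a) * (b - e) - (α - β)) / (c - a) := by
  unfold muKdV; field_simp; ring

lemma muKdV_muKdV_sub (hca : c - a ≠ 0) (hP : (c - a) * (d - b) + (α - β) ≠ 0) :
    muKdV α γ (muKdV α β a b c) c d - a =
      (c - a) * ((c - a) * (d - b) - (β - γ)) / ((c - a) * (d - b) + (α - β)) := by
  have hw : d - muKdV α β a b c ≠ 0 := by rw [sub_muKdV hca]; exact div_ne_zero hP hca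
  rw [muKdV_sub hw, sub_muKdV hca]
  field_simp
  ring

lemma sub_muKdV_muKdV (hdb : d - b ≠ 0) (hQ : (c - a) * (d - b) - (β - γ) ≠ 0) :
    d - muKdV α γ a b (muKdV β γ b c d) =
      (d - b) * ((c - a) * (d - b) + (α - β)) / ((c - a) * (d - b) - (β - γ)) := by
  have hw : muKdV β γ b c d - a ≠ 0 := by
    rw [muKdV_sub hdb]; exact div_ne_zero (by rwa [mul_comm]) hdb
  rw [sub_muKdV hw, muKdV_sub hdb]
  field_simp
  ring

theorem muKdV_consistency_left (hca : c - a ≠ 0) (hdb : d - b ≠ 0)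
    (hP : (c - a) * (d - b) + (α - β) ≠ 0) (hQ : (c - a) * (d - b) - (β - γ) ≠ 0) :
    muKdV β γ a (muKdV α β a b c) (muKdV α γ (muKdV α β a b c) c d) =
      muKdV α γ a b (muKdV β γ b c d) := by
  conv_lhs => rw [muKdV, muKdV_muKdV_sub hca hP]
  conv_rhs => rw [muKdV, muKdV_sub hdb]
  unfold muKdV
  field_simp
  ring

theorem muKdV_consistency_right (hca : c - a ≠ 0) (hdb : d - b ≠ 0)
    (hP : (c - a) * (d - b) + (α - β) ≠ 0) (hQ : (c - a) * (d - b) - (β - γ) ≠ 0) :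
    muKdV α β (muKdV α γ a b (muKdV β γ b c d)) (muKdV β γ b c d) d =
      muKdV α γ (muKdV α β a b c) c d := by
  conv_lhs => rw [muKdV, sub_muKdV_muKdV hdb hQ]
  conv_rhs => rw [muKdV, sub_muKdV hca]
  -- the form in which `field_simp` meets this denominator
  have hP' : (d - b) * (c - a) + (α - β) ≠ 0 := by rwa [mul_comm]
  unfold muKdV
  field_simp
  ring

end

theorem dKdV_3D_compatible_general (α β γ a b c d w₁ w₂ t₁ l₁ r₁ l₂ : ℂ)
    (hw₁ : w₁ = muKdV α β a b c) (hw₂ : w₂ = muKdV β γ b c d)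
    (ht₁ : t₁ = muKdV α γ w₁ c d)
    (hl₁ : l₁ = muKdV β γ a w₁ t₁) (hr₁ : r₁ = muKdV α γ a b w₂)
    (hl₂ : l₂ = muKdV α β r₁ w₂ d)
    (h1 : c - a ≠ 0) (h2 : d - b ≠ 0)
    (h3 : d - w₁ ≠ 0)
    (h5 : w₂ - a ≠ 0) :
    l₁ = r₁ ∧ l₂ = t₁ := by
  subst hw₁ hw₂ ht₁ hl₁ hr₁ hl₂
  have hP : (c - a) * (d - b) + (α - β) ≠ 0 := by
    rw [sub_muKdV h1] at h3
    exact (div_ne_zero_iff.mp h3).1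
  have hQ : (c - a) * (d - b) - (β - γ) ≠ 0 := by
    rw [muKdV_sub h2, mul_comm] at h5
    exact (div_ne_zero_iff.mp h5).1
  exact ⟨muKdV_consistency_left h1 h2 hP hQ, muKdV_consistency_right h1 h2 hP hQ⟩

/-- the dKdV ternary operation satisfies the two 3D-compatibility identities,
wherever all denominators are nonzero. -/
theorem dKdV_3D_compatible (α β γ a b c d w₁ w₂ t₁ l₁ r₁ l₂ : ℂ)
    (hw₁ : w₁ = muKdV α β a b c) (hw₂ : w₂ = muKdV β γ b c d)
    (ht₁ : t₁ = muKdV α γ w₁ c d)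
    (hl₁ : l₁ = muKdV β γ a w₁ t₁) (hr₁ : r₁ = muKdV α γ a b w₂)
    (hl₂ : l₂ = muKdV α β r₁ w₂ d)
    (h1 : c - a ≠ 0) (h2 : d - b ≠ 0)
    (h3 : d - w₁ ≠ 0) (h4 : t₁ - a ≠ 0)
    (h5 : w₂ - a ≠ 0) (h6 : d - r₁ ≠ 0) :
    l₁ = r₁ ∧ l₂ = t₁ :=
  dKdV_3D_compatible_general α β γ a b c d w₁ w₂ t₁ l₁ r₁ l₂ hw₁ hw₂ ht₁ hl₁ hr₁ hl₂ h1 h2 h3 h5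
end
end

section
/- The four-parametric map R_{α,β}(x,y) = (y(β₁x + α₂y)/(α₁x + β₂y), x(β₁x + α₂y)/(α₁x + β₂y)), with parameters α = (α₁,α₂), β = (β₁,β₂), satisfies the parametric Yang–Baxter equation R²³_{β,γ} ∘ R¹³_{α,γ} ∘ R¹²_{α,β} = R¹²_{α,β} ∘ R¹³_{α,γ} ∘ R²³_{β,γ}, wherever defined. -/
/-!
Writing `R_{α,β}(x,y) = s · (y, x)` with the multiplier `s = (β₁x + α₂y)/(α₁x + β₂y)`, which is
homogeneous of degree zero, each side of the Yang–Baxter equation sends `(x, y, z)` to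
`(z, y, x)` rescaled coordinatewise: the left side by `(s₂, s₁s₂s₃, s₁s₃)`, the right side by
`(t₁t₃, t₁t₂t₃, t₂)`, where `sᵢ`, `tᵢ` are the multipliers of the successive steps. So it suffices
that `s₂ = t₁t₃` and `s₁s₃ = t₂`. Clearing the inner denominator at each step writes every
multiplier as a quotient of polynomials, and the two identities become polynomial identities.
-/

noncomputable section

/-- First component of the four-parametric map, `α = (p₁,p₂)`, `β = (q₁,q₂)`. -/
def u4 (p₁ p₂ q₁ q₂ x y : ℂ) : ℂ := y * (q₁*x + p₂*y) / (p₁*x + q₂*y)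

def v4 (p₁ p₂ q₁ q₂ x y : ℂ) : ℂ := x * (q₁*x + p₂*y) / (p₁*x + q₂*y)

def d4 (p₁ p₂ q₁ q₂ x y : ℂ) : ℂ := p₁*x + q₂*y

def scale4 (p₁ p₂ q₁ q₂ x y : ℂ) : ℂ := (q₁*x + p₂*y) / d4 p₁ p₂ q₁ q₂ x y

section
variable {p₁ p₂ q₁ q₂ : ℂ}

theorem u4_eq_mul_scale4 (x y : ℂ) : u4 p₁ p₂ q₁ q₂ x y = y * scale4 p₁ p₂ q₁ q₂ x y :=
  mul_div_assoc _ _ _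

theorem v4_eq_mul_scale4 (x y : ℂ) : v4 p₁ p₂ q₁ q₂ x y = x * scale4 p₁ p₂ q₁ q₂ x y :=
  mul_div_assoc _ _ _

theorem d4_mul_mul (x y c : ℂ) : d4 p₁ p₂ q₁ q₂ (x * c) (y * c) = d4 p₁ p₂ q₁ q₂ x y * c := by
  unfold d4; ring

theorem scale4_mul_mul {c : ℂ} (hc : c ≠ 0) (x y : ℂ) :
    scale4 p₁ p₂ q₁ q₂ (x * c) (y * c) = scale4 p₁ p₂ q₁ q₂ x y := by
  rw [scale4, scale4, d4_mul_mul, ← mul_assoc, ← mul_assoc, ← add_mul, mul_div_mul_right _ _ hc]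

theorem d4_mul_div_left {w : ℂ} (hw : w ≠ 0) (x n y : ℂ) :
    d4 p₁ p₂ q₁ q₂ (x * (n / w)) y = d4 p₁ p₂ q₁ q₂ (x * n) (w * y) / w := by
  unfold d4; field_simp

theorem d4_mul_div_right {w : ℂ} (hw : w ≠ 0) (x y n : ℂ) :
    d4 p₁ p₂ q₁ q₂ x (y * (n / w)) = d4 p₁ p₂ q₁ q₂ (w * x) (y * n) / w := by
  unfold d4; field_simp

theorem scale4_mul_div_left {w : ℂ} (hw : w ≠ 0) (x n y : ℂ) :
    scale4 p₁ p₂ q₁ q₂ (x * (n / w)) y = scale4 p₁ p₂ q₁ q₂ (x * n) (w * y) := by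
  rw [← scale4_mul_mul (inv_ne_zero hw) (x * n) (w * y)]
  congr 1 <;> field_simp

theorem scale4_mul_div_right {w : ℂ} (hw : w ≠ 0) (x y n : ℂ) :
    scale4 p₁ p₂ q₁ q₂ x (y * (n / w)) = scale4 p₁ p₂ q₁ q₂ (w * x) (y * n) := by
  rw [← scale4_mul_mul (inv_ne_zero hw) (w * x) (y * n)]
  congr 1 <;> field_simp

end

theorem scale4_yangBaxter {α₁ α₂ β₁ β₂ γ₁ γ₂ x y z s₁ s₂ s₃ t₁ t₂ t₃ : ℂ}
    (hs₁ : s₁ = scale4 α₁ α₂ β₁ β₂ x y) (hs₂ : s₂ = scale4 α₁ α₂ γ₁ γ₂ (y * s₁) z)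
    (hs₃ : s₃ = scale4 β₁ β₂ γ₁ γ₂ x (y * s₂))
    (ht₁ : t₁ = scale4 β₁ β₂ γ₁ γ₂ y z) (ht₂ : t₂ = scale4 α₁ α₂ γ₁ γ₂ x (y * t₁))
    (ht₃ : t₃ = scale4 α₁ α₂ β₁ β₂ (y * t₂) z)
    (h1 : d4 α₁ α₂ β₁ β₂ x y ≠ 0) (h2 : d4 α₁ α₂ γ₁ γ₂ (y * s₁) z ≠ 0)
    (h3 : d4 β₁ β₂ γ₁ γ₂ x (y * s₂) ≠ 0) (h4 : d4 β₁ β₂ γ₁ γ₂ y z ≠ 0)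
    (h5 : d4 α₁ α₂ γ₁ γ₂ x (y * t₁) ≠ 0) (h6 : d4 α₁ α₂ β₁ β₂ (y * t₂) z ≠ 0) :
    s₂ = t₁ * t₃ ∧ s₁ * s₃ = t₂ := by
  unfold scale4 at hs₁ ht₁
  rw [hs₁, scale4_mul_div_left h1] at hs₂
  rw [hs₁, d4_mul_div_left h1, div_ne_zero_iff] at h2
  rw [ht₁, scale4_mul_div_right h4] at ht₂
  rw [ht₁, d4_mul_div_right h4, div_ne_zero_iff] at h5
  unfold scale4 at hs₂ ht₂
  rw [hs₂, scale4_mul_div_right h2.1] at hs₃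
  rw [hs₂, d4_mul_div_right h2.1, div_ne_zero_iff] at h3
  rw [ht₂, scale4_mul_div_left h5.1] at ht₃
  rw [ht₂, d4_mul_div_left h5.1, div_ne_zero_iff] at h6
  unfold scale4 at hs₃ ht₃
  subst_vars
  constructor
  · rw [div_mul_div_comm, div_eq_div_iff h2.1 (mul_ne_zero h4 h6.1)]
    unfold d4
    ring
  · rw [div_mul_div_comm, div_eq_div_iff (mul_ne_zero h1 h3.1) h5.1]
    unfold d4
    ring

theorem fourparam_YangBaxter_general (α₁ α₂ β₁ β₂ γ₁ γ₂ x y z : ℂ)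
    (x₁ y₁ x₂ z₁ y₂ z₂ ty tz tx tzz txx tyy : ℂ)
    (hx₁ : x₁ = u4 α₁ α₂ β₁ β₂ x y) (hy₁ : y₁ = v4 α₁ α₂ β₁ β₂ x y)
    (hx₂ : x₂ = u4 α₁ α₂ γ₁ γ₂ x₁ z) (hz₁ : z₁ = v4 α₁ α₂ γ₁ γ₂ x₁ z)
    (hy₂ : y₂ = u4 β₁ β₂ γ₁ γ₂ y₁ z₁) (hz₂ : z₂ = v4 β₁ β₂ γ₁ γ₂ y₁ z₁)
    (hty : ty = u4 β₁ β₂ γ₁ γ₂ y z) (htz : tz = v4 β₁ β₂ γ₁ γ₂ y z)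
    (htx : tx = u4 α₁ α₂ γ₁ γ₂ x tz) (htzz : tzz = v4 α₁ α₂ γ₁ γ₂ x tz)
    (htxx : txx = u4 α₁ α₂ β₁ β₂ tx ty) (htyy : tyy = v4 α₁ α₂ β₁ β₂ tx ty)
    (h1 : d4 α₁ α₂ β₁ β₂ x y ≠ 0) (h2 : d4 α₁ α₂ γ₁ γ₂ x₁ z ≠ 0)
    (h3 : d4 β₁ β₂ γ₁ γ₂ y₁ z₁ ≠ 0) (h4 : d4 β₁ β₂ γ₁ γ₂ y z ≠ 0)
    (h5 : d4 α₁ α₂ γ₁ γ₂ x tz ≠ 0) (h6 : d4 α₁ α₂ β₁ β₂ tx ty ≠ 0) :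
    x₂ = txx ∧ y₂ = tyy ∧ z₂ = tzz := by
  subst_vars
  simp only [u4_eq_mul_scale4, v4_eq_mul_scale4] at *
  set s₁ := scale4 α₁ α₂ β₁ β₂ x y with hs₁
  set s₂ := scale4 α₁ α₂ γ₁ γ₂ (y * s₁) z with hs₂
  set t₁ := scale4 β₁ β₂ γ₁ γ₂ y z with ht₁
  set t₂ := scale4 α₁ α₂ γ₁ γ₂ x (y * t₁) with ht₂
  rw [mul_right_comm y s₁ s₂] at h3 ⊢
  rw [mul_right_comm y t₁ t₂] at h6 ⊢
  -- `h3`, `h6` factor through `s₁`, `t₁`, which are hence nonzero and drop out of the third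
  -- multipliers by homogeneity
  rw [d4_mul_mul, mul_ne_zero_iff] at h3 h6
  obtain ⟨h3, hs₁_ne⟩ := h3
  obtain ⟨h6, ht₁_ne⟩ := h6
  rw [scale4_mul_mul hs₁_ne, scale4_mul_mul ht₁_ne]
  obtain ⟨hz_scale, hx_scale⟩ := scale4_yangBaxter hs₁ hs₂ rfl ht₁ ht₂ rfl h1 h2 h3 h4 h5 h6
  refine ⟨?_, ?_, ?_⟩
  · linear_combination z * hz_scale
  · linear_combination y * s₂ * hx_scale + y * t₂ * hz_scale
  · linear_combination x * hx_scale

/-- the four-parametric map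
`R_(α,β)(x,y) = (y(β₁x+α₂y)/(α₁x+β₂y), x(β₁x+α₂y)/(α₁x+β₂y))`, `α = (α₁,α₂)`, `β = (β₁,β₂)`,
satisfies the parametric Yang–Baxter equation, wherever defined. -/
theorem fourparam_YangBaxter (α₁ α₂ β₁ β₂ γ₁ γ₂ x y z : ℂ)
    (hx : x ≠ 0) (hy : y ≠ 0) (hz : z ≠ 0)
    (x₁ y₁ x₂ z₁ y₂ z₂ ty tz tx tzz txx tyy : ℂ)
    (hx₁ : x₁ = u4 α₁ α₂ β₁ β₂ x y) (hy₁ : y₁ = v4 α₁ α₂ β₁ β₂ x y)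
    (hx₂ : x₂ = u4 α₁ α₂ γ₁ γ₂ x₁ z) (hz₁ : z₁ = v4 α₁ α₂ γ₁ γ₂ x₁ z)
    (hy₂ : y₂ = u4 β₁ β₂ γ₁ γ₂ y₁ z₁) (hz₂ : z₂ = v4 β₁ β₂ γ₁ γ₂ y₁ z₁)
    (hty : ty = u4 β₁ β₂ γ₁ γ₂ y z) (htz : tz = v4 β₁ β₂ γ₁ γ₂ y z)
    (htx : tx = u4 α₁ α₂ γ₁ γ₂ x tz) (htzz : tzz = v4 α₁ α₂ γ₁ γ₂ x tz)
    (htxx : txx = u4 α₁ α₂ β₁ β₂ tx ty) (htyy : tyy = v4 α₁ α₂ β₁ β₂ tx ty)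
    (h1 : d4 α₁ α₂ β₁ β₂ x y ≠ 0) (h2 : d4 α₁ α₂ γ₁ γ₂ x₁ z ≠ 0)
    (h3 : d4 β₁ β₂ γ₁ γ₂ y₁ z₁ ≠ 0) (h4 : d4 β₁ β₂ γ₁ γ₂ y z ≠ 0)
    (h5 : d4 α₁ α₂ γ₁ γ₂ x tz ≠ 0) (h6 : d4 α₁ α₂ β₁ β₂ tx ty ≠ 0) :
    x₂ = txx ∧ y₂ = tyy ∧ z₂ = tzz :=
  fourparam_YangBaxter_general α₁ α₂ β₁ β₂ γ₁ γ₂ x y z x₁ y₁ x₂ z₁ y₂ z₂ ty tz tx tzz txx tyy hx₁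
    hy₁ hx₂ hz₁ hy₂ hz₂ hty htz htx htzz htxx htyy h1 h2 h3 h4 h5 h6

end
end

section
/- The matrix L(x;α) = [[−α₁ζ, x],[1/x, −α₂ζ]] is a strong Lax matrix for the map R_{α,β}(x,y) = (u,v) with u = y(β₁x + α₂y)/(α₁x + β₂y) and v = x(β₁x + α₂y)/(α₁x + β₂y): the matrix equation L(u;α)L(v;β) = L(y;β)L(x;α), holding identically in the spectral parameter ζ, is equivalent to (u,v) = R_{α,β}(x,y) for nonzero x, y, u, v (with α₁β₂ ≠ α₂β₁ and denominators nonzero). -/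
/-! Comparing coefficients of `ζ` in the Lax equation: the `ζ²` terms agree identically, the
constant terms say `u/v = y/x`, and the two `ζ`-linear entries say `α₁v + β₂u = β₁x + α₂y`
and, once `u x = y v`, the same thing again. These two equations are linear in `(u, v)`, with
the map `R_{α,β}` as their unique solution when `α₁x + β₂y ≠ 0`. -/

noncomputable section

open Matrix

/-- The Lax matrix `L(x;α) = [[−α₁ζ, x],[1/x, −α₂ζ]]`, `α = (α₁,α₂)`. -/
def LaxL (p₁ p₂ x ζ : ℂ) : Matrix (Fin 2) (Fin 2) ℂ :=
  !![-p₁*ζ, x; 1/x, -p₂*ζ]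

theorem LaxL_mul_LaxL (a₁ a₂ b₁ b₂ u v ζ : ℂ) :
    LaxL a₁ a₂ u ζ * LaxL b₁ b₂ v ζ =
      !![a₁*b₁*ζ^2 + u/v, -(a₁*v + b₂*u)*ζ; -(b₁/u + a₂/v)*ζ, a₂*b₂*ζ^2 + v/u] := by
  ext i j
  fin_cases i <;> fin_cases j <;> simp [LaxL] <;> ring

theorem div_add_div_eq_of_cross_eq {K : Type*} [Field K] {α₁ α₂ β₁ β₂ x y u v : K}
    (hx : x ≠ 0) (hy : y ≠ 0) (hu : u ≠ 0) (hv : v ≠ 0)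
    (hcross : u * x = y * v) (hsum : α₁*v + β₂*u = β₁*x + α₂*y) :
    β₁/u + α₂/v = α₁/y + β₂/x := by
  field_simp
  linear_combination -(v*y) * hsum + (α₂*y - α₁*v) * hcross

theorem forall_LaxL_mul_LaxL_eq_iff {α₁ α₂ β₁ β₂ x y u v : ℂ}
    (hx : x ≠ 0) (hy : y ≠ 0) (hu : u ≠ 0) (hv : v ≠ 0) :
    (∀ ζ : ℂ, LaxL α₁ α₂ u ζ * LaxL β₁ β₂ v ζ = LaxL β₁ β₂ y ζ * LaxL α₁ α₂ x ζ) ↔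
      (u * x = y * v ∧ α₁*v + β₂*u = β₁*x + α₂*y) := by
  simp only [LaxL_mul_LaxL]
  constructor
  · intro h
    have h₀₀ : u / v = y / x := by simpa using congrFun (congrFun (h 0) 0) 0
    have h₀₁ : -(α₁*v + β₂*u) = -(β₁*x + α₂*y) := by simpa using congrFun (congrFun (h 1) 0) 1
    exact ⟨(div_eq_div_iff hv hx).mp h₀₀, neg_inj.mp h₀₁⟩
  · rintro ⟨hcross, hsum⟩ ζ
    have h₀₀ : u / v = y / x := (div_eq_div_iff hv hx).mpr hcross
    have h₁₁ : v / u = x / y := (div_eq_div_iff hu hy).mpr (by linear_combination -hcross)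
    rw [h₀₀, h₁₁, hsum, div_add_div_eq_of_cross_eq hx hy hu hv hcross hsum,
      mul_comm α₁ β₁, mul_comm α₂ β₂]

theorem cross_eq_and_sum_eq_iff {K : Type*} [Field K] {α₁ α₂ β₁ β₂ x y u v : K}
    (hden : α₁*x + β₂*y ≠ 0) :
    (u * x = y * v ∧ α₁*v + β₂*u = β₁*x + α₂*y) ↔
      (u = y * (β₁*x + α₂*y) / (α₁*x + β₂*y) ∧ v = x * (β₁*x + α₂*y) / (α₁*x + β₂*y)) := by
  rw [eq_div_iff hden, eq_div_iff hden]
  constructor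
  · rintro ⟨hcross, hsum⟩
    exact ⟨by linear_combination y * hsum + α₁ * hcross,
      by linear_combination x * hsum - β₂ * hcross⟩
  · rintro ⟨hu, hv⟩
    refine ⟨mul_right_cancel₀ hden ?_, mul_right_cancel₀ hden ?_⟩
    · linear_combination x * hu - y * hv
    · linear_combination α₁ * hv + β₂ * hu

theorem Lax_strong_general (α₁ α₂ β₁ β₂ x y u v : ℂ)
    (hx : x ≠ 0) (hy : y ≠ 0) (hu : u ≠ 0) (hv : v ≠ 0)
    (hden : α₁*x + β₂*y ≠ 0) :
    (∀ ζ : ℂ, LaxL α₁ α₂ u ζ * LaxL β₁ β₂ v ζ = LaxL β₁ β₂ y ζ * LaxL α₁ α₂ x ζ) ↔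
      (u = y * (β₁*x + α₂*y) / (α₁*x + β₂*y) ∧
       v = x * (β₁*x + α₂*y) / (α₁*x + β₂*y)) :=
  (forall_LaxL_mul_LaxL_eq_iff hx hy hu hv).trans (cross_eq_and_sum_eq_iff hden)

/-- `L(x;α)` is a strong Lax matrix for the map
`R_(α,β)(x,y) = (y(β₁x+α₂y)/(α₁x+β₂y), x(β₁x+α₂y)/(α₁x+β₂y))`: for nonzero `x,y,u,v`,
with `α₁β₂ ≠ α₂β₁` and the denominator `α₁x+β₂y` nonzero, the equation
`L(u;α)L(v;β) = L(y;β)L(x;α)` holding identically in the spectral parameter `ζ`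
is equivalent to `(u,v) = R_(α,β)(x,y)`. -/
theorem Lax_strong (α₁ α₂ β₁ β₂ x y u v : ℂ)
    (hx : x ≠ 0) (hy : y ≠ 0) (hu : u ≠ 0) (hv : v ≠ 0)
    (hnd : α₁*β₂ ≠ α₂*β₁) (hden : α₁*x + β₂*y ≠ 0) :
    (∀ ζ : ℂ, LaxL α₁ α₂ u ζ * LaxL β₁ β₂ v ζ = LaxL β₁ β₂ y ζ * LaxL α₁ α₂ x ζ) ↔
      (u = y * (β₁*x + α₂*y) / (α₁*x + β₂*y) ∧
       v = x * (β₁*x + α₂*y) / (α₁*x + β₂*y)) :=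
  Lax_strong_general α₁ α₂ β₁ β₂ x y u v hx hy hu hv hden

end
end

section
/- The ternary operation μ_{α,β}(a,b,c) = b(β₁a + α₂c)/(α₁a + β₂c), with parameters α = (α₁,α₂), β = (β₁,β₂), satisfies the two 3D-compatibility identities μ_{β,γ}(a, μ_{α,β}(a,b,c), μ_{α,γ}(μ_{α,β}(a,b,c), c, d)) = μ_{α,γ}(a, b, μ_{β,γ}(b,c,d)) and μ_{α,β}(μ_{α,γ}(a,b,μ_{β,γ}(b,c,d)), μ_{β,γ}(b,c,d), d) = μ_{α,γ}(μ_{α,β}(a,b,c), c, d), wherever all denominators are nonzero. -/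
/-! Homogeneity of `mu4` (degree 0 in its outer arguments, degree 1 in the middle one) clears
the nested denominators, so both sides of the first identity become quotients of polynomials.
With `P = β₁a + α₂c`, the denominator of the left side factors as `P` times the denominator of
the right side, and its numerator as `D4 α₁ α₂ β₁ β₂ a c` times the numerator of the right side;
these factors cancel against those of the middle argument `mu4 α₁ α₂ β₁ β₂ a b c`.

The second identity is the first one read backwards: `mu4 p₁ p₂ q₁ q₂ a b c = mu4 q₂ q₁ p₂ p₁ c b a`
turns `(a, b, c, d)` into `(d, c, b, a)` and `(α, β, γ)` into `(γ̄, β̄, ᾱ)`, where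
`ᾱ = (α₂, α₁)`. -/

noncomputable section

def mu4 (p₁ p₂ q₁ q₂ a b c : ℂ) : ℂ := b * (q₁*a + p₂*c) / (p₁*a + q₂*c)

def D4 (p₁ p₂ q₁ q₂ a c : ℂ) : ℂ := p₁*a + q₂*c

section Homogeneity

variable {p₁ p₂ q₁ q₂ a b c x e : ℂ}

theorem mu4_eq_div_D4 : mu4 p₁ p₂ q₁ q₂ a b c = b * (q₁*a + p₂*c) / D4 p₁ p₂ q₁ q₂ a c := rfl

theorem mu4_reverse (p₁ p₂ q₁ q₂ a b c : ℂ) : mu4 p₁ p₂ q₁ q₂ a b c = mu4 q₂ q₁ p₂ p₁ c b a := by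
  unfold mu4; ring

theorem D4_reverse (p₁ p₂ q₁ q₂ a c : ℂ) : D4 p₁ p₂ q₁ q₂ a c = D4 q₂ q₁ p₂ p₁ c a := by
  unfold D4; ring

theorem D4_div_left (he : e ≠ 0) : D4 p₁ p₂ q₁ q₂ (x / e) c = D4 p₁ p₂ q₁ q₂ x (c * e) / e := by
  unfold D4; field_simp

theorem D4_div_right (he : e ≠ 0) : D4 p₁ p₂ q₁ q₂ a (x / e) = D4 p₁ p₂ q₁ q₂ (a * e) x / e := by
  unfold D4; field_simp

theorem mu4_div_mid : mu4 p₁ p₂ q₁ q₂ a (x / e) c = mu4 p₁ p₂ q₁ q₂ a x c / e := by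
  unfold mu4; ring

theorem mu4_div_left (he : e ≠ 0) : mu4 p₁ p₂ q₁ q₂ (x / e) b c = mu4 p₁ p₂ q₁ q₂ x b (c * e) := by
  unfold mu4
  rw [← mul_div_mul_right _ _ he]
  congr 1 <;> field_simp

theorem mu4_div_right (he : e ≠ 0) : mu4 p₁ p₂ q₁ q₂ a b (x / e) = mu4 p₁ p₂ q₁ q₂ (a * e) b x := by
  unfold mu4
  rw [← mul_div_mul_right _ _ he]
  congr 1 <;> field_simp

end Homogeneity

section Compatibility

variable {α₁ α₂ β₁ β₂ γ₁ γ₂ a b c d : ℂ}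

theorem mu4_3D_compatible_fst (h1 : D4 α₁ α₂ β₁ β₂ a c ≠ 0) (h2 : D4 β₁ β₂ γ₁ γ₂ b d ≠ 0)
    (h3 : D4 α₁ α₂ γ₁ γ₂ (mu4 α₁ α₂ β₁ β₂ a b c) d ≠ 0)
    (h4 : D4 β₁ β₂ γ₁ γ₂ a (mu4 α₁ α₂ γ₁ γ₂ (mu4 α₁ α₂ β₁ β₂ a b c) c d) ≠ 0) :
    mu4 β₁ β₂ γ₁ γ₂ a (mu4 α₁ α₂ β₁ β₂ a b c) (mu4 α₁ α₂ γ₁ γ₂ (mu4 α₁ α₂ β₁ β₂ a b c) c d)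
      = mu4 α₁ α₂ γ₁ γ₂ a b (mu4 β₁ β₂ γ₁ γ₂ b c d) := by
  rw [mu4_eq_div_D4 (a := a) (b := b) (c := c)] at h3 h4 ⊢
  rw [D4_div_left h1, div_ne_zero_iff] at h3
  obtain ⟨hE₃, -⟩ := h3
  rw [mu4_div_left h1, mu4_eq_div_D4 (b := c)] at h4 ⊢
  rw [D4_div_right hE₃] at h4
  rw [mu4_div_right hE₃, mu4_div_mid, mu4_eq_div_D4, mu4_eq_div_D4 (a := b), mu4_div_right h2,
    mu4_eq_div_D4]
  set P := β₁ * a + α₂ * c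
  set Q := γ₁ * b + β₂ * d
  set D₁ := D4 α₁ α₂ β₁ β₂ a c
  set D₂ := D4 β₁ β₂ γ₁ γ₂ b d
  set E₃ := D4 α₁ α₂ γ₁ γ₂ (b * P) (d * D₁)
  set E₅ := D4 α₁ α₂ γ₁ γ₂ (a * D₂) (c * Q)
  have hden : D4 β₁ β₂ γ₁ γ₂ (a * E₃) (c * (γ₁ * (b * P) + α₂ * (d * D₁))) = P * E₅ := by
    simp only [E₃, E₅, D₁, D₂, D4]; ring
  have hnum : γ₁ * (a * E₃) + β₂ * (c * (γ₁ * (b * P) + α₂ * (d * D₁)))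
      = D₁ * (γ₁ * (a * D₂) + α₂ * (c * Q)) := by
    simp only [E₃, D₁, D₂, D4]; ring
  rw [hden, hnum]
  rw [hden, div_ne_zero_iff, mul_ne_zero_iff] at h4
  obtain ⟨⟨hP, -⟩, -⟩ := h4
  field_simp

theorem mu4_3D_compatible_snd (h1 : D4 α₁ α₂ β₁ β₂ a c ≠ 0) (h2 : D4 β₁ β₂ γ₁ γ₂ b d ≠ 0)
    (h5 : D4 α₁ α₂ γ₁ γ₂ a (mu4 β₁ β₂ γ₁ γ₂ b c d) ≠ 0)
    (h6 : D4 α₁ α₂ β₁ β₂ (mu4 α₁ α₂ γ₁ γ₂ a b (mu4 β₁ β₂ γ₁ γ₂ b c d)) d ≠ 0) :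
    mu4 α₁ α₂ β₁ β₂ (mu4 α₁ α₂ γ₁ γ₂ a b (mu4 β₁ β₂ γ₁ γ₂ b c d)) (mu4 β₁ β₂ γ₁ γ₂ b c d) d
      = mu4 α₁ α₂ γ₁ γ₂ (mu4 α₁ α₂ β₁ β₂ a b c) c d := by
  have := mu4_3D_compatible_fst (α₁ := γ₂) (α₂ := γ₁) (β₁ := β₂) (β₂ := β₁) (γ₁ := α₂) (γ₂ := α₁)
    (a := d) (b := c) (c := b) (d := a)
  rw [mu4_reverse γ₂ γ₁ β₂ β₁ d c b, mu4_reverse γ₂ γ₁ α₂ α₁ _ b a, mu4_reverse β₂ β₁ α₂ α₁ d,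
    mu4_reverse β₂ β₁ α₂ α₁ c, mu4_reverse γ₂ γ₁ α₂ α₁ d, D4_reverse γ₂ γ₁ β₂ β₁,
    D4_reverse β₂ β₁ α₂ α₁ c, D4_reverse γ₂ γ₁ α₂ α₁, D4_reverse β₂ β₁ α₂ α₁ d] at this
  exact this h2 h1 h5 h6

end Compatibility

theorem mu4_3D_compatible_general (α₁ α₂ β₁ β₂ γ₁ γ₂ a b c d w₁ w₂ t₁ l₁ r₁ l₂ : ℂ)
    (hw₁ : w₁ = mu4 α₁ α₂ β₁ β₂ a b c) (hw₂ : w₂ = mu4 β₁ β₂ γ₁ γ₂ b c d)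
    (ht₁ : t₁ = mu4 α₁ α₂ γ₁ γ₂ w₁ c d)
    (hl₁ : l₁ = mu4 β₁ β₂ γ₁ γ₂ a w₁ t₁) (hr₁ : r₁ = mu4 α₁ α₂ γ₁ γ₂ a b w₂)
    (hl₂ : l₂ = mu4 α₁ α₂ β₁ β₂ r₁ w₂ d)
    (h1 : D4 α₁ α₂ β₁ β₂ a c ≠ 0) (h2 : D4 β₁ β₂ γ₁ γ₂ b d ≠ 0)
    (h3 : D4 α₁ α₂ γ₁ γ₂ w₁ d ≠ 0) (h4 : D4 β₁ β₂ γ₁ γ₂ a t₁ ≠ 0)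
    (h5 : D4 α₁ α₂ γ₁ γ₂ a w₂ ≠ 0) (h6 : D4 α₁ α₂ β₁ β₂ r₁ d ≠ 0) :
    l₁ = r₁ ∧ l₂ = t₁ := by
  subst hw₁ hw₂ ht₁ hl₁ hr₁ hl₂
  exact ⟨mu4_3D_compatible_fst h1 h2 h3 h4, mu4_3D_compatible_snd h1 h2 h5 h6⟩

/-- the ternary operation `μ_(α,β)(a,b,c) = b(β₁a+α₂c)/(α₁a+β₂c)` satisfies
the two 3D-compatibility identities, wherever all denominators are nonzero. -/
theorem mu4_3D_compatible (α₁ α₂ β₁ β₂ γ₁ γ₂ a b c d w₁ w₂ t₁ l₁ r₁ l₂ : ℂ)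
    (ha : a ≠ 0) (hb : b ≠ 0) (hc : c ≠ 0) (hd : d ≠ 0)
    (hw₁ : w₁ = mu4 α₁ α₂ β₁ β₂ a b c) (hw₂ : w₂ = mu4 β₁ β₂ γ₁ γ₂ b c d)
    (ht₁ : t₁ = mu4 α₁ α₂ γ₁ γ₂ w₁ c d)
    (hl₁ : l₁ = mu4 β₁ β₂ γ₁ γ₂ a w₁ t₁) (hr₁ : r₁ = mu4 α₁ α₂ γ₁ γ₂ a b w₂)
    (hl₂ : l₂ = mu4 α₁ α₂ β₁ β₂ r₁ w₂ d)
    (h1 : D4 α₁ α₂ β₁ β₂ a c ≠ 0) (h2 : D4 β₁ β₂ γ₁ γ₂ b d ≠ 0)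
    (h3 : D4 α₁ α₂ γ₁ γ₂ w₁ d ≠ 0) (h4 : D4 β₁ β₂ γ₁ γ₂ a t₁ ≠ 0)
    (h5 : D4 α₁ α₂ γ₁ γ₂ a w₂ ≠ 0) (h6 : D4 α₁ α₂ β₁ β₂ r₁ d ≠ 0) :
    l₁ = r₁ ∧ l₂ = t₁ :=
  mu4_3D_compatible_general α₁ α₂ β₁ β₂ γ₁ γ₂ a b c d w₁ w₂ t₁ l₁ r₁ l₂ hw₁ hw₂ ht₁ hl₁ hr₁ hl₂ h1
    h2 h3 h4 h5 h6

end
end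

section
/- The map R_{α,β}(x,y) = (y(α₁ + β₂xy)/(β₁ + α₂xy), x(β₁ + α₂xy)/(α₁ + β₂xy)) is an involution (R_{α,β} ∘ R_{α,β} = id), satisfies the invariance condition v(x,y)·u(x,y) = x·y where (u,v) = R_{α,β}(x,y), and satisfies the parametric Yang–Baxter equation, wherever defined. -/
noncomputable section

/-- First component of the map, `α = (p₁,p₂)`, `β = (q₁,q₂)`. -/
def uI (p₁ p₂ q₁ q₂ x y : ℂ) : ℂ := y * (p₁ + q₂*x*y) / (q₁ + p₂*x*y)

/-- Second component of the map. -/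
def vI (p₁ p₂ q₁ q₂ x y : ℂ) : ℂ := x * (q₁ + p₂*x*y) / (p₁ + q₂*x*y)

/-!
With `m_{αβ}(s) = (α₁ + β₂ s) / (β₁ + α₂ s)` the map is `R_{α,β}(x,y) = (y m, x / m)`, where
`m = m_{αβ}(xy)`. It preserves the product `xy`, hence also `m`, and so it is an involution.
Both sides of the Yang–Baxter equation move `(x,y,z)` by such factors: with `s = xy`, `t = yz`,
`f = m_{αβ}(s)`, `g = m_{αγ}(t f)`, `h = m_{βγ}(s / g)` and `f' = m_{βγ}(t)`, `g' = m_{αγ}(s / f')`,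
`h' = m_{αβ}(t g')`, the left side is `(z g, y f h / g, x / (f h))` and the right side is
`(z f' h', y g' / (f' h'), x / g')`. So it suffices that `g = f' h'` and `f h = g'`; in both
identities, once the nested fractions are cleared, numerator and denominator of one side are those
of the other times a common factor.
-/

section Field

variable {K : Type*} [Field K]

def ybFactor (p₁ p₂ q₁ q₂ t : K) : K := (p₁ + q₂ * t) / (q₁ + p₂ * t)

theorem add_mul_div_eq (a b N : K) {D : K} (hD : D ≠ 0) :
    a + b * (N / D) = (a * D + b * N) / D := by
  rw [← mul_div_assoc, add_div' _ _ _ hD]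

theorem ybFactor_div (p₁ p₂ q₁ q₂ N : K) {D : K} (hD : D ≠ 0) :
    ybFactor p₁ p₂ q₁ q₂ (N / D) = (p₁ * D + q₂ * N) / (q₁ * D + p₂ * N) := by
  rw [ybFactor, add_mul_div_eq _ _ _ hD, add_mul_div_eq _ _ _ hD, div_div_div_cancel_right₀ hD]

theorem div_mul_div_eq_of_eq_mul {a b c d X Y : K} (ha : a ≠ 0) (hb : b ≠ 0) (hX : X = b * c)
    (hY : Y = a * d) : a / b * (X / Y) = c / d := by
  rw [hX, hY, div_mul_div_comm, mul_left_comm a b c, mul_div_mul_left _ _ hb,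
    mul_div_mul_left _ _ ha]

variable {α₁ α₂ β₁ β₂ γ₁ γ₂ s t : K}

theorem ybFactor_mul_ybFactor (hb : β₁ + α₂ * s ≠ 0) :
    ybFactor α₁ α₂ γ₁ γ₂ (t * ybFactor α₁ α₂ β₁ β₂ s) =
      (α₁ * (β₁ + α₂ * s) + γ₂ * (t * (α₁ + β₂ * s))) /
        (γ₁ * (β₁ + α₂ * s) + α₂ * (t * (α₁ + β₂ * s))) := by
  rw [ybFactor.eq_1 α₁ α₂ β₁ β₂, ← mul_div_assoc, ybFactor_div _ _ _ _ _ hb]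

theorem ybFactor_div_ybFactor (hc : β₁ + γ₂ * t ≠ 0) :
    ybFactor α₁ α₂ γ₁ γ₂ (s / ybFactor β₁ β₂ γ₁ γ₂ t) =
      (α₁ * (β₁ + γ₂ * t) + γ₂ * (s * (γ₁ + β₂ * t))) /
        (γ₁ * (β₁ + γ₂ * t) + α₂ * (s * (γ₁ + β₂ * t))) := by
  rw [ybFactor.eq_1 β₁ β₂ γ₁ γ₂, div_div_eq_mul_div, ybFactor_div _ _ _ _ _ hc]

theorem ybFactor_yangBaxter_fst (hb : β₁ + α₂ * s ≠ 0) (hc : β₁ + γ₂ * t ≠ 0)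
    (hd : γ₁ + β₂ * t ≠ 0) (hQ : γ₁ + α₂ * (s / ybFactor β₁ β₂ γ₁ γ₂ t) ≠ 0) :
    ybFactor α₁ α₂ γ₁ γ₂ (t * ybFactor α₁ α₂ β₁ β₂ s) =
      ybFactor β₁ β₂ γ₁ γ₂ t *
        ybFactor α₁ α₂ β₁ β₂ (t * ybFactor α₁ α₂ γ₁ γ₂ (s / ybFactor β₁ β₂ γ₁ γ₂ t)) := by
  rw [ybFactor.eq_1 β₁ β₂ γ₁ γ₂, div_div_eq_mul_div, add_mul_div_eq _ _ _ hc] at hQ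
  rw [ybFactor_mul_ybFactor hb, ybFactor_div_ybFactor hc, ybFactor.eq_1 β₁ β₂ γ₁ γ₂,
    ← mul_div_assoc, ybFactor_div _ _ _ _ _ (div_ne_zero_iff.mp hQ).1]
  -- the common factors are `γ₁ + β₂ t` in the numerator and `β₁ + γ₂ t` in the denominator
  exact (div_mul_div_eq_of_eq_mul hc hd (by ring) (by ring)).symm

theorem ybFactor_yangBaxter_snd (ha : α₁ + β₂ * s ≠ 0) (hb : β₁ + α₂ * s ≠ 0)
    (hc : β₁ + γ₂ * t ≠ 0) (hN : α₁ + γ₂ * (t * ybFactor α₁ α₂ β₁ β₂ s) ≠ 0) :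
    ybFactor α₁ α₂ β₁ β₂ s *
        ybFactor β₁ β₂ γ₁ γ₂ (s / ybFactor α₁ α₂ γ₁ γ₂ (t * ybFactor α₁ α₂ β₁ β₂ s)) =
      ybFactor α₁ α₂ γ₁ γ₂ (s / ybFactor β₁ β₂ γ₁ γ₂ t) := by
  rw [ybFactor.eq_1 α₁ α₂ β₁ β₂, ← mul_div_assoc, add_mul_div_eq _ _ _ hb] at hN
  rw [ybFactor_mul_ybFactor hb, ybFactor_div_ybFactor hc, div_div_eq_mul_div,
    ybFactor_div _ _ _ _ _ (div_ne_zero_iff.mp hN).1, ybFactor.eq_1 α₁ α₂ β₁ β₂]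
  -- the common factors are `β₁ + α₂ s` in the numerator and `α₁ + β₂ s` in the denominator
  exact div_mul_div_eq_of_eq_mul ha hb (by ring) (by ring)

end Field

theorem uI_eq (p₁ p₂ q₁ q₂ x y : ℂ) : uI p₁ p₂ q₁ q₂ x y = y * ybFactor p₁ p₂ q₁ q₂ (x * y) := by
  rw [uI, ybFactor, mul_div_assoc, mul_assoc, mul_assoc]

theorem vI_eq (p₁ p₂ q₁ q₂ x y : ℂ) : vI p₁ p₂ q₁ q₂ x y = x / ybFactor p₁ p₂ q₁ q₂ (x * y) := by
  rw [vI, ybFactor, div_div_eq_mul_div, mul_assoc, mul_assoc]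

section Involution

variable {p₁ p₂ q₁ q₂ x y : ℂ}

theorem ybFactor_mul_ne_zero (h : q₁ + p₂*x*y ≠ 0) (h' : p₁ + q₂*x*y ≠ 0) :
    ybFactor p₁ p₂ q₁ q₂ (x * y) ≠ 0 :=
  div_ne_zero (by rwa [← mul_assoc]) (by rwa [← mul_assoc])

theorem uI_mul_vI (h : q₁ + p₂*x*y ≠ 0) (h' : p₁ + q₂*x*y ≠ 0) :
    uI p₁ p₂ q₁ q₂ x y * vI p₁ p₂ q₁ q₂ x y = x * y := by
  rw [uI_eq, vI_eq, mul_assoc, mul_div_cancel₀ _ (ybFactor_mul_ne_zero h h'), mul_comm]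

theorem uI_uI_vI (h : q₁ + p₂*x*y ≠ 0) (h' : p₁ + q₂*x*y ≠ 0) :
    uI p₁ p₂ q₁ q₂ (uI p₁ p₂ q₁ q₂ x y) (vI p₁ p₂ q₁ q₂ x y) = x := by
  rw [uI_eq _ _ _ _ (uI _ _ _ _ _ _), uI_mul_vI h h', vI_eq,
    div_mul_cancel₀ _ (ybFactor_mul_ne_zero h h')]

theorem vI_uI_vI (h : q₁ + p₂*x*y ≠ 0) (h' : p₁ + q₂*x*y ≠ 0) :
    vI p₁ p₂ q₁ q₂ (uI p₁ p₂ q₁ q₂ x y) (vI p₁ p₂ q₁ q₂ x y) = y := by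
  rw [vI_eq _ _ _ _ (uI _ _ _ _ _ _), uI_mul_vI h h', uI_eq,
    mul_div_cancel_right₀ _ (ybFactor_mul_ne_zero h h')]

end Involution

theorem involutive_fourparam_YB_general (α₁ α₂ β₁ β₂ γ₁ γ₂ x y z : ℂ)
    (x₁ y₁ x₂ z₁ y₂ z₂ ty tz tx tzz txx tyy : ℂ)
    (hx₁ : x₁ = uI α₁ α₂ β₁ β₂ x y) (hy₁ : y₁ = vI α₁ α₂ β₁ β₂ x y)
    (hx₂ : x₂ = uI α₁ α₂ γ₁ γ₂ x₁ z) (hz₁ : z₁ = vI α₁ α₂ γ₁ γ₂ x₁ z)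
    (hy₂ : y₂ = uI β₁ β₂ γ₁ γ₂ y₁ z₁) (hz₂ : z₂ = vI β₁ β₂ γ₁ γ₂ y₁ z₁)
    (hty : ty = uI β₁ β₂ γ₁ γ₂ y z) (htz : tz = vI β₁ β₂ γ₁ γ₂ y z)
    (htx : tx = uI α₁ α₂ γ₁ γ₂ x tz) (htzz : tzz = vI α₁ α₂ γ₁ γ₂ x tz)
    (htxx : txx = uI α₁ α₂ β₁ β₂ tx ty) (htyy : tyy = vI α₁ α₂ β₁ β₂ tx ty)
    -- denominators nonzero at every point of application:
    (h1 : β₁ + α₂*x*y ≠ 0) (h1' : α₁ + β₂*x*y ≠ 0)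
    (h2' : α₁ + γ₂*x₁*z ≠ 0)
    (h4 : γ₁ + β₂*y*z ≠ 0) (h4' : β₁ + γ₂*y*z ≠ 0)
    (h5 : γ₁ + α₂*x*tz ≠ 0) :
    -- involution:
    (uI α₁ α₂ β₁ β₂ x₁ y₁ = x ∧ vI α₁ α₂ β₁ β₂ x₁ y₁ = y) ∧
    -- invariance:
    y₁ * x₁ = x * y ∧
    -- Yang–Baxter:
    (x₂ = txx ∧ y₂ = tyy ∧ z₂ = tzz) := by
  have inv₁ : x₁ * y₁ = x * y := by rw [hx₁, hy₁, uI_mul_vI h1 h1']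
  have inv₄ : ty * tz = y * z := by rw [hty, htz, uI_mul_vI h4 h4']
  refine ⟨by rw [hx₁, hy₁]; exact ⟨uI_uI_vI h1 h1', vI_uI_vI h1 h1'⟩, by rw [mul_comm, inv₁], ?_⟩
  rw [uI_eq] at hx₁ hx₂ hy₂ hty htx htxx
  rw [vI_eq] at hy₁ hz₁ hz₂ htz htzz htyy
  have e₁ : x₁ * z = y * z * ybFactor α₁ α₂ β₁ β₂ (x * y) := by rw [hx₁, mul_right_comm]
  have e₂ : y₁ * z₁ = x * y / ybFactor α₁ α₂ γ₁ γ₂ (x₁ * z) := by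
    rw [hz₁, ← mul_div_assoc, mul_comm y₁, inv₁]
  have e₃ : x * tz = x * y / ybFactor β₁ β₂ γ₁ γ₂ (y * z) := by rw [htz, mul_div_assoc]
  have e₄ : tx * ty = y * z * ybFactor α₁ α₂ γ₁ γ₂ (x * tz) := by
    rw [htx, mul_right_comm, mul_comm tz, inv₄]
  have ha : α₁ + β₂ * (x * y) ≠ 0 := by rwa [← mul_assoc]
  have hb : β₁ + α₂ * (x * y) ≠ 0 := by rwa [← mul_assoc]
  have hc : β₁ + γ₂ * (y * z) ≠ 0 := by rwa [← mul_assoc]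
  have hd : γ₁ + β₂ * (y * z) ≠ 0 := by rwa [← mul_assoc]
  have fst := ybFactor_yangBaxter_fst (α₁ := α₁) hb hc hd (by rwa [← e₃, ← mul_assoc])
  have snd := ybFactor_yangBaxter_snd (γ₁ := γ₁) ha hb hc (by rwa [← e₁, ← mul_assoc])
  rw [← e₁, ← e₃, ← e₄] at fst
  rw [← e₁, ← e₂, ← e₃] at snd
  generalize ybFactor α₁ α₂ β₁ β₂ (x * y) = f, ybFactor α₁ α₂ γ₁ γ₂ (x₁ * z) = g,
    ybFactor β₁ β₂ γ₁ γ₂ (y₁ * z₁) = h, ybFactor β₁ β₂ γ₁ γ₂ (y * z) = f',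
    ybFactor α₁ α₂ γ₁ γ₂ (x * tz) = g', ybFactor α₁ α₂ β₁ β₂ (tx * ty) = h' at *
  subst_vars
  refine ⟨by ring, by ring, by ring⟩

/-- the map `R_(α,β)(x,y) = (y(α₁+β₂xy)/(β₁+α₂xy), x(β₁+α₂xy)/(α₁+β₂xy))`
is an involution, satisfies the invariance condition `v·u = x·y`, and satisfies the
parametric Yang–Baxter equation, wherever defined. -/
theorem involutive_fourparam_YB (α₁ α₂ β₁ β₂ γ₁ γ₂ x y z : ℂ)
    (hx : x ≠ 0) (hy : y ≠ 0) (hz : z ≠ 0)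
    (x₁ y₁ x₂ z₁ y₂ z₂ ty tz tx tzz txx tyy : ℂ)
    (hx₁ : x₁ = uI α₁ α₂ β₁ β₂ x y) (hy₁ : y₁ = vI α₁ α₂ β₁ β₂ x y)
    (hx₂ : x₂ = uI α₁ α₂ γ₁ γ₂ x₁ z) (hz₁ : z₁ = vI α₁ α₂ γ₁ γ₂ x₁ z)
    (hy₂ : y₂ = uI β₁ β₂ γ₁ γ₂ y₁ z₁) (hz₂ : z₂ = vI β₁ β₂ γ₁ γ₂ y₁ z₁)
    (hty : ty = uI β₁ β₂ γ₁ γ₂ y z) (htz : tz = vI β₁ β₂ γ₁ γ₂ y z)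
    (htx : tx = uI α₁ α₂ γ₁ γ₂ x tz) (htzz : tzz = vI α₁ α₂ γ₁ γ₂ x tz)
    (htxx : txx = uI α₁ α₂ β₁ β₂ tx ty) (htyy : tyy = vI α₁ α₂ β₁ β₂ tx ty)
    -- denominators nonzero at every point of application:
    (h1 : β₁ + α₂*x*y ≠ 0) (h1' : α₁ + β₂*x*y ≠ 0)
    (h1i : β₁ + α₂*x₁*y₁ ≠ 0) (h1i' : α₁ + β₂*x₁*y₁ ≠ 0)
    (h2 : γ₁ + α₂*x₁*z ≠ 0) (h2' : α₁ + γ₂*x₁*z ≠ 0)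
    (h3 : γ₁ + β₂*y₁*z₁ ≠ 0) (h3' : β₁ + γ₂*y₁*z₁ ≠ 0)
    (h4 : γ₁ + β₂*y*z ≠ 0) (h4' : β₁ + γ₂*y*z ≠ 0)
    (h5 : γ₁ + α₂*x*tz ≠ 0) (h5' : α₁ + γ₂*x*tz ≠ 0)
    (h6 : β₁ + α₂*tx*ty ≠ 0) (h6' : α₁ + β₂*tx*ty ≠ 0) :
    -- involution:
    (uI α₁ α₂ β₁ β₂ x₁ y₁ = x ∧ vI α₁ α₂ β₁ β₂ x₁ y₁ = y) ∧
    -- invariance: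
    y₁ * x₁ = x * y ∧
    -- Yang–Baxter:
    (x₂ = txx ∧ y₂ = tyy ∧ z₂ = tzz) :=
  involutive_fourparam_YB_general α₁ α₂ β₁ β₂ γ₁ γ₂ x y z x₁ y₁ x₂ z₁ y₂ z₂ ty tz tx tzz txx tyy hx₁
    hy₁ hx₂ hz₁ hy₂ hz₂ hty htz htx htzz htxx htyy h1 h1' h2' h4 h4' h5

end
end

section
/- Let R_{α,β}: X²×X² → X²×X² be a parametric Yang–Baxter map with components (u₁,u₂,v₁,v₂), and let f_α: X → X be a parameter-dependent function such that u₂(x₁,f_α(x₁),y₁,f_β(y₁)) = f_α(u₁(x₁,f_α(x₁),y₁,f_β(y₁))) and v₂(x₁,f_α(x₁),y₁,f_β(y₁)) = f_β(v₁(x₁,f_α(x₁),y₁,f_β(y₁))) for all x₁, y₁ ∈ X and parameters α, β. Then the reduced map R̃_{α,β}(x,y) = (u₁(x,f_α(x),y,f_β(y)), v₁(x,f_α(x),y,f_β(y))) is a parametric Yang–Baxter map. -/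
/-- The action of a map `S` on the first and second factors of a triple product. -/
def R12 {Z : Type*} (S : Z → Z → Z × Z) : Z × Z × Z → Z × Z × Z :=
  fun p => ((S p.1 p.2.1).1, (S p.1 p.2.1).2, p.2.2)

/-- The action of a map `S` on the first and third factors of a triple product. -/
def R13 {Z : Type*} (S : Z → Z → Z × Z) : Z × Z × Z → Z × Z × Z :=
  fun p => ((S p.1 p.2.2).1, p.2.1, (S p.1 p.2.2).2)

/-- The action of a map `S` on the second and third factors of a triple product. -/
def R23 {Z : Type*} (S : Z → Z → Z × Z) : Z × Z × Z → Z × Z × Z :=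
  fun p => (p.1, (S p.2.1 p.2.2).1, (S p.2.1 p.2.2).2)

/-- A parametric family `S_(α,β) : Z × Z → Z × Z` is a parametric Yang–Baxter map if
`R²³_(β,γ) ∘ R¹³_(α,γ) ∘ R¹²_(α,β) = R¹²_(α,β) ∘ R¹³_(α,γ) ∘ R²³_(β,γ)`. -/
def IsParametricYB {Z I : Type*} (S : I → I → Z → Z → Z × Z) : Prop :=
  ∀ α β γ : I,
    R23 (S β γ) ∘ R13 (S α γ) ∘ R12 (S α β) = R12 (S α β) ∘ R13 (S α γ) ∘ R23 (S β γ)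

/-!
The graphs `{(x, f_α x)}` are preserved by `R_{α,β}`, on which it acts as the reduced map.
Hence the embeddings `x ↦ (x, f_α x)` intertwine each `R^{ij}` of the reduced map with the
corresponding `R^{ij}` of `R`, and the Yang–Baxter identity for `R` pulls back along the
injective map `(x, y, z) ↦ ((x, f_α x), (y, f_β y), (z, f_γ z))`.
-/

open Function

section Intertwining

variable {Y Z : Type*} {S : Z → Z → Z × Z} {T : Y → Y → Y × Y} {e₁ e₂ e₃ : Y → Z}

theorem R12_prodMap (h : ∀ a b, S (e₁ a) (e₂ b) = Prod.map e₁ e₂ (T a b)) (p : Y × Y × Y) :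
    R12 S (Prod.map e₁ (Prod.map e₂ e₃) p) = Prod.map e₁ (Prod.map e₂ e₃) (R12 T p) := by
  simp only [R12, Prod.map, h]

theorem R13_prodMap (h : ∀ a c, S (e₁ a) (e₃ c) = Prod.map e₁ e₃ (T a c)) (p : Y × Y × Y) :
    R13 S (Prod.map e₁ (Prod.map e₂ e₃) p) = Prod.map e₁ (Prod.map e₂ e₃) (R13 T p) := by
  simp only [R13, Prod.map, h]

theorem R23_prodMap (h : ∀ b c, S (e₂ b) (e₃ c) = Prod.map e₂ e₃ (T b c)) (p : Y × Y × Y) :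
    R23 S (Prod.map e₁ (Prod.map e₂ e₃) p) = Prod.map e₁ (Prod.map e₂ e₃) (R23 T p) := by
  simp only [R23, Prod.map, h]

end Intertwining

theorem IsParametricYB.of_intertwining {Y Z I : Type*} {S : I → I → Z → Z → Z × Z}
    {T : I → I → Y → Y → Y × Y} (hS : IsParametricYB S) (e : I → Y → Z)
    (he : ∀ α, Injective (e α))
    (h : ∀ α β a b, S α β (e α a) (e β b) = Prod.map (e α) (e β) (T α β a b)) :
    IsParametricYB T := by
  intro α β γ
  funext p
  apply ((he α).prodMap ((he β).prodMap (he γ)))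
  simpa only [comp_apply, R12_prodMap (h α β), R13_prodMap (h α γ), R23_prodMap (h β γ)]
    using congrFun (hS α β γ) (Prod.map (e α) (Prod.map (e β) (e γ)) p)

/-- Lemma 1: if `R_(α,β) : X² × X² → X² × X²` with components
`(u₁,u₂,v₁,v₂)` is a parametric Yang–Baxter map and `f_α : X → X` satisfies the
compatibility conditions
`u₂(x,f_α(x),y,f_β(y)) = f_α(u₁(x,f_α(x),y,f_β(y)))` and
`v₂(x,f_α(x),y,f_β(y)) = f_β(v₁(x,f_α(x),y,f_β(y)))`,
then the reduced map `R̃_(α,β)(x,y) = (u₁(x,f_α(x),y,f_β(y)), v₁(x,f_α(x),y,f_β(y)))`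
is a parametric Yang–Baxter map. -/
theorem reduced_YB_map {X I : Type*}
    (u₁ u₂ v₁ v₂ : I → I → X → X → X → X → X)
    (f : I → X → X)
    (hYB : IsParametricYB (fun (α β : I) (x y : X × X) =>
      ((u₁ α β x.1 x.2 y.1 y.2, u₂ α β x.1 x.2 y.1 y.2),
       (v₁ α β x.1 x.2 y.1 y.2, v₂ α β x.1 x.2 y.1 y.2))))
    (hu : ∀ (α β : I) (x y : X),
      u₂ α β x (f α x) y (f β y) = f α (u₁ α β x (f α x) y (f β y)))
    (hv : ∀ (α β : I) (x y : X),
      v₂ α β x (f α x) y (f β y) = f β (v₁ α β x (f α x) y (f β y))) :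
    IsParametricYB (fun (α β : I) (x y : X) =>
      (u₁ α β x (f α x) y (f β y), v₁ α β x (f α x) y (f β y))) := by
  refine hYB.of_intertwining (fun α x => (x, f α x))
    (fun α => LeftInverse.injective (g := Prod.fst) fun _ => rfl) fun α β x y => ?_
  simp only [Prod.map_apply, hu, hv]
end
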